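/- arXiv:2103.11488 — 3 statements merged into one kernel-verified Lean document; each statement's English description precedes it below -/
import Mathlib

section
/- Let A be an invertible matrix in ℝ^{n×n}, let f̂, f, v ∈ ℝ^n and e ∈ ℝ^n. If ‖A f̂ - (A f + e)‖₂ ≤ ‖A v - (A f + e)‖₂, then ‖f̂ - f‖₂ ≤ ‖A⁻¹‖₂ (‖A (v - f)‖₂ + 2 ‖e‖₂), where ‖A⁻¹‖₂ denotes the operator norm induced by the Euclidean norm. -/
noncomputable def l2OpNorm {m n : Type*} [Fintype m] [Fintype n] [DecidableEq n]
    (A : Matrix m n ℝ) : ℝ :=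
  ‖LinearMap.toContinuousLinearMap (Matrix.toEuclideanLin A)‖

theorem stmt0 (n : ℕ) (A : Matrix (Fin n) (Fin n) ℝ) (hA : IsUnit A)
    (fhat f v e : EuclideanSpace ℝ (Fin n))
    (hmin : ‖Matrix.toEuclideanLin A fhat - (Matrix.toEuclideanLin A f + e)‖ ≤
            ‖Matrix.toEuclideanLin A v - (Matrix.toEuclideanLin A f + e)‖) :
    ‖fhat - f‖ ≤ l2OpNorm A⁻¹ * (‖Matrix.toEuclideanLin A (v - f)‖ + 2 * ‖e‖) := by
  have hinv : A⁻¹ * A = 1 := Matrix.nonsing_inv_mul A ((Matrix.isUnit_iff_isUnit_det A).mp hA)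
  have key : ∀ x : EuclideanSpace ℝ (Fin n),
      Matrix.toEuclideanLin A⁻¹ (Matrix.toEuclideanLin A x) = x := by
    intro x
    simp [Matrix.toEuclideanLin_eq_toLin, ← Matrix.toLin_mul_apply, hinv]
  have h1 : fhat - f = Matrix.toEuclideanLin A⁻¹ (Matrix.toEuclideanLin A (fhat - f)) :=
    (key _).symm
  have h2 : ‖fhat - f‖ ≤ l2OpNorm A⁻¹ * ‖Matrix.toEuclideanLin A (fhat - f)‖ := by
    conv_lhs => rw [h1]
    exact (LinearMap.toContinuousLinearMap (Matrix.toEuclideanLin A⁻¹)).le_opNorm _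
  have h3 : ‖Matrix.toEuclideanLin A (fhat - f)‖ ≤
      ‖Matrix.toEuclideanLin A (v - f)‖ + 2 * ‖e‖ := by
    have e1 : Matrix.toEuclideanLin A (fhat - f)
        = (Matrix.toEuclideanLin A fhat - (Matrix.toEuclideanLin A f + e)) + e := by
      simp [map_sub]; abel
    have e2 : Matrix.toEuclideanLin A v - (Matrix.toEuclideanLin A f + e)
        = Matrix.toEuclideanLin A (v - f) - e := by
      simp [map_sub]; abel
    calc ‖Matrix.toEuclideanLin A (fhat - f)‖
        ≤ ‖Matrix.toEuclideanLin A fhat - (Matrix.toEuclideanLin A f + e)‖ + ‖e‖ := by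
          rw [e1]; exact norm_add_le _ _
      _ ≤ ‖Matrix.toEuclideanLin A v - (Matrix.toEuclideanLin A f + e)‖ + ‖e‖ := by linarith
      _ ≤ ‖Matrix.toEuclideanLin A (v - f)‖ + 2 * ‖e‖ := by
          rw [e2]; have := norm_sub_le (Matrix.toEuclideanLin A (v - f)) e; linarith
  calc ‖fhat - f‖ ≤ l2OpNorm A⁻¹ * ‖Matrix.toEuclideanLin A (fhat - f)‖ := h2
    _ ≤ l2OpNorm A⁻¹ * (‖Matrix.toEuclideanLin A (v - f)‖ + 2 * ‖e‖) :=
        mul_le_mul_of_nonneg_left h3 (norm_nonneg _)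
end

section
/- Let A be an invertible matrix in ℝ^{n×n}, f̂, f, v, e ∈ ℝ^n with ‖A f̂ - (A f + e)‖₂ ≤ ‖A v - (A f + e)‖₂ and ‖v - f‖_∞ ≤ ε. Then ‖f̂ - f‖₂ ≤ κ₂(A) · √n · ε + 2 ‖A⁻¹‖₂ ‖e‖₂, where κ₂(A) = ‖A‖₂ ‖A⁻¹‖₂ is the 2-condition number. -/
theorem EuclideanSpace.norm_le_sqrt_card_mul {ι : Type*} [Fintype ι]
    (x : EuclideanSpace ℝ ι) {ε : ℝ} (hε : 0 ≤ ε) (hx : ∀ i, |x i| ≤ ε) :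
    ‖x‖ ≤ √(Fintype.card ι) * ε := by
  have hsum : ∑ i, ‖x i‖ ^ 2 ≤ Fintype.card ι * ε ^ 2 := by
    calc ∑ i, ‖x i‖ ^ 2 ≤ ∑ _i : ι, ε ^ 2 :=
          Finset.sum_le_sum fun i _ => pow_le_pow_left₀ (norm_nonneg _) (hx i) 2
      _ = Fintype.card ι * ε ^ 2 := by simp
  calc ‖x‖ = √(∑ i, ‖x i‖ ^ 2) := EuclideanSpace.norm_eq x
    _ ≤ √(Fintype.card ι * ε ^ 2) := Real.sqrt_le_sqrt hsum
    _ = √(Fintype.card ι) * ε := by rw [Real.sqrt_mul (Nat.cast_nonneg _), Real.sqrt_sq hε]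

theorem norm_le_norm_add_two_mul_of_norm_sub_le {E : Type*} [SeminormedAddCommGroup E]
    {a b e : E} (h : ‖a - e‖ ≤ ‖b - e‖) : ‖a‖ ≤ ‖b‖ + 2 * ‖e‖ :=
  calc ‖a‖ ≤ ‖a - e‖ + ‖e‖ := norm_le_norm_sub_add a e
    _ ≤ ‖b - e‖ + ‖e‖ := by gcongr
    _ ≤ ‖b‖ + ‖e‖ + ‖e‖ := by gcongr; exact norm_sub_le b e
    _ = ‖b‖ + 2 * ‖e‖ := by ring

section l2OpNorm

variable {m n : Type*} [Fintype m] [Fintype n] [DecidableEq n]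

theorem norm_toEuclideanLin_le (A : Matrix m n ℝ) (x : EuclideanSpace ℝ n) :
    ‖Matrix.toEuclideanLin A x‖ ≤ l2OpNorm A * ‖x‖ :=
  (LinearMap.toContinuousLinearMap (Matrix.toEuclideanLin A)).le_opNorm x

theorem norm_le_l2OpNorm_inv_mul {A : Matrix n n ℝ} (hA : IsUnit A) (x : EuclideanSpace ℝ n) :
    ‖x‖ ≤ l2OpNorm A⁻¹ * ‖Matrix.toEuclideanLin A x‖ := by
  have hinv : Matrix.toEuclideanLin A⁻¹ (Matrix.toEuclideanLin A x) = x := by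
    rw [← LinearMap.comp_apply, ← Matrix.toLpLin_mul_same,
      Matrix.nonsing_inv_mul A ((Matrix.isUnit_iff_isUnit_det A).mp hA), Matrix.toLpLin_one,
      LinearMap.id_apply]
  calc ‖x‖ = ‖Matrix.toEuclideanLin A⁻¹ (Matrix.toEuclideanLin A x)‖ := by rw [hinv]
    _ ≤ l2OpNorm A⁻¹ * ‖Matrix.toEuclideanLin A x‖ := norm_toEuclideanLin_le _ _

end l2OpNorm

theorem stmt1 (n : ℕ) (A : Matrix (Fin n) (Fin n) ℝ) (hA : IsUnit A)
    (fhat f v e : EuclideanSpace ℝ (Fin n)) (ε : ℝ)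
    (hmin : ‖Matrix.toEuclideanLin A fhat - (Matrix.toEuclideanLin A f + e)‖ ≤
            ‖Matrix.toEuclideanLin A v - (Matrix.toEuclideanLin A f + e)‖)
    (hinf : ∀ i, |v i - f i| ≤ ε) :
    ‖fhat - f‖ ≤ (l2OpNorm A * l2OpNorm A⁻¹) * Real.sqrt n * ε
      + 2 * l2OpNorm A⁻¹ * ‖e‖ := by
  set T := Matrix.toEuclideanLin A
  have hvf : ‖v - f‖ ≤ √n * ε := by
    rcases n.eq_zero_or_pos with rfl | hn
    · simp [EuclideanSpace.norm_eq]
    · simpa using EuclideanSpace.norm_le_sqrt_card_mul (v - f)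
        ((abs_nonneg _).trans (hinf ⟨0, hn⟩)) hinf
  have hresidual : ‖T (fhat - f)‖ ≤ l2OpNorm A * (√n * ε) + 2 * ‖e‖ :=
    calc ‖T (fhat - f)‖ ≤ ‖T (v - f)‖ + 2 * ‖e‖ := by
          rw [map_sub, map_sub]
          exact norm_le_norm_add_two_mul_of_norm_sub_le (by simpa only [sub_sub] using hmin)
      _ ≤ l2OpNorm A * ‖v - f‖ + 2 * ‖e‖ := by gcongr; exact norm_toEuclideanLin_le A _
      _ ≤ l2OpNorm A * (√n * ε) + 2 * ‖e‖ := by gcongr; exact norm_nonneg _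
  calc ‖fhat - f‖ ≤ l2OpNorm A⁻¹ * ‖T (fhat - f)‖ := norm_le_l2OpNorm_inv_mul hA _
    _ ≤ l2OpNorm A⁻¹ * (l2OpNorm A * (√n * ε) + 2 * ‖e‖) := by
      gcongr; exact norm_nonneg _
    _ = (l2OpNorm A * l2OpNorm A⁻¹) * Real.sqrt n * ε + 2 * l2OpNorm A⁻¹ * ‖e‖ := by ring
end

section
/- Let B₁ ∈ ℝ^{m×k}, B₂ ∈ ℝ^{m×m} invertible, and A = [[I_k, 0], [B₁, B₂]]. If there exist constants C₁, C₂, C₃ with ‖B₁‖₂ ≤ C₁, ‖B₂‖₂ ≤ C₂, ‖B₂⁻¹‖₂ ≤ C₃, then κ₂(A) ≤ (1 + (C₁ + C₂)²)^{1/2} · (1 + C₃²(1 + C₁)²)^{1/2}, where κ₂(A) = ‖A‖₂‖A⁻¹‖₂. -/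
open Matrix WithLp
open scoped Matrix.Norms.L2Operator

theorem l2OpNorm_eq_norm {m n : Type*} [Fintype m] [Fintype n] [DecidableEq n]
    (A : Matrix m n ℝ) : l2OpNorm A = ‖A‖ := rfl

namespace EuclideanSpace

variable {𝕜 : Type*} [RCLike 𝕜] {n p : Type*} [Fintype n] [Fintype p]

theorem norm_sq_toLp_sumElim (u : n → 𝕜) (w : p → 𝕜) :
    ‖toLp 2 (Sum.elim u w)‖ ^ 2 = ‖toLp 2 u‖ ^ 2 + ‖toLp 2 w‖ ^ 2 := by
  simp only [norm_sq_eq, Fintype.sum_sum_type, Sum.elim_inl, Sum.elim_inr]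

theorem norm_toLp_le_sumElim_left (u : n → 𝕜) (w : p → 𝕜) :
    ‖toLp 2 u‖ ≤ ‖toLp 2 (Sum.elim u w)‖ :=
  le_of_sq_le_sq (by rw [norm_sq_toLp_sumElim]; exact le_add_of_nonneg_right (sq_nonneg _))
    (norm_nonneg _)

theorem norm_toLp_le_sumElim_right (u : n → 𝕜) (w : p → 𝕜) :
    ‖toLp 2 w‖ ≤ ‖toLp 2 (Sum.elim u w)‖ :=
  le_of_sq_le_sq (by rw [norm_sq_toLp_sumElim]; exact le_add_of_nonneg_left (sq_nonneg _))
    (norm_nonneg _)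

end EuclideanSpace

namespace Matrix

variable {𝕜 : Type*} [RCLike 𝕜] {l m n p : Type*} [Fintype l] [Fintype m] [Fintype n]
  [Fintype p] [DecidableEq n] [DecidableEq p]

theorem l2_opNorm_one_le : ‖(1 : Matrix n n 𝕜)‖ ≤ 1 := by
  rw [← l2_opNorm_toEuclideanCLM, map_one]
  exact ContinuousLinearMap.norm_id_le

theorem l2_opNorm_fromBlocks_zero₁₂_le (P : Matrix l n 𝕜) (R : Matrix m n 𝕜)
    (S : Matrix m p 𝕜) :
    ‖fromBlocks P 0 R S‖ ≤ √(‖P‖ ^ 2 + (‖R‖ + ‖S‖) ^ 2) := by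
  rw [l2_opNorm_def]
  refine ContinuousLinearMap.opNorm_le_bound _ (Real.sqrt_nonneg _) fun x ↦ ?_
  obtain ⟨u, w, rfl⟩ : ∃ u w, x = toLp 2 (Sum.elim u w) :=
    ⟨ofLp x ∘ Sum.inl, ofLp x ∘ Sum.inr, by simp⟩
  have hu := EuclideanSpace.norm_toLp_le_sumElim_left u w
  have hw := EuclideanSpace.norm_toLp_le_sumElim_right u w
  have hP : ‖toLp 2 (P *ᵥ u)‖ ≤ ‖P‖ * ‖toLp 2 (Sum.elim u w)‖ :=
    (l2_opNorm_mulVec P _).trans (by gcongr)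
  have hRS : ‖toLp 2 (R *ᵥ u + S *ᵥ w)‖ ≤ (‖R‖ + ‖S‖) * ‖toLp 2 (Sum.elim u w)‖ :=
    calc ‖toLp 2 (R *ᵥ u + S *ᵥ w)‖ ≤ ‖toLp 2 (R *ᵥ u)‖ + ‖toLp 2 (S *ᵥ w)‖ := by
          rw [toLp_add]; exact norm_add_le _ _
      _ ≤ ‖R‖ * ‖toLp 2 u‖ + ‖S‖ * ‖toLp 2 w‖ :=
          add_le_add (l2_opNorm_mulVec R _) (l2_opNorm_mulVec S _)
      _ ≤ (‖R‖ + ‖S‖) * ‖toLp 2 (Sum.elim u w)‖ := by rw [add_mul]; gcongr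
  have happly : (toEuclideanLin.trans LinearMap.toContinuousLinearMap) (fromBlocks P 0 R S)
      (toLp 2 (Sum.elim u w)) = toLp 2 (Sum.elim (P *ᵥ u) (R *ᵥ u + S *ᵥ w)) := by
    simp [fromBlocks_mulVec]
  rw [happly, ← Real.sqrt_sq (norm_nonneg (toLp 2 (Sum.elim u w))),
    ← Real.sqrt_mul (by positivity), Real.le_sqrt (norm_nonneg _) (by positivity),
    EuclideanSpace.norm_sq_toLp_sumElim, add_mul, ← mul_pow, ← mul_pow]
  gcongr

theorem inv_fromBlocks_one_zero₁₂_of_isUnit {R : Type*} [CommRing R] [DecidableEq m]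
    (C : Matrix m n R) {D : Matrix m m R} (hD : IsUnit D) :
    (fromBlocks (1 : Matrix n n R) 0 C D)⁻¹ = fromBlocks 1 0 (-(D⁻¹ * C)) D⁻¹ := by
  rw [inv_fromBlocks_zero₁₂_of_isUnit_iff _ _ _ (iff_of_true isUnit_one hD), inv_one,
    Matrix.mul_one]

end Matrix

theorem stmt4 (k m : ℕ) (B₁ : Matrix (Fin m) (Fin k) ℝ) (B₂ : Matrix (Fin m) (Fin m) ℝ)
    (hB₂ : IsUnit B₂) (C₁ C₂ C₃ : ℝ)
    (h1 : l2OpNorm B₁ ≤ C₁) (h2 : l2OpNorm B₂ ≤ C₂) (h3 : l2OpNorm B₂⁻¹ ≤ C₃) :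
    l2OpNorm (Matrix.fromBlocks (1 : Matrix (Fin k) (Fin k) ℝ) 0 B₁ B₂) *
      l2OpNorm (Matrix.fromBlocks (1 : Matrix (Fin k) (Fin k) ℝ) 0 B₁ B₂)⁻¹ ≤
      Real.sqrt (1 + (C₁ + C₂) ^ 2) * Real.sqrt (1 + C₃ ^ 2 * (1 + C₁) ^ 2) := by
  rw [l2OpNorm_eq_norm] at h1 h2 h3
  rw [l2OpNorm_eq_norm, l2OpNorm_eq_norm, inv_fromBlocks_one_zero₁₂_of_isUnit _ hB₂]
  have hone : ‖(1 : Matrix (Fin k) (Fin k) ℝ)‖ ^ 2 ≤ 1 :=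
    pow_le_one₀ (norm_nonneg _) l2_opNorm_one_le
  have hC₃ : 0 ≤ C₃ := (norm_nonneg _).trans h3
  have hlower : ‖-(B₂⁻¹ * B₁)‖ + ‖B₂⁻¹‖ ≤ C₃ * (1 + C₁) := by
    rw [norm_neg, mul_add, mul_one, add_comm]
    gcongr
    exact (l2_opNorm_mul _ _).trans (by gcongr)
  calc ‖fromBlocks 1 0 B₁ B₂‖ * ‖fromBlocks 1 0 (-(B₂⁻¹ * B₁)) B₂⁻¹‖
      ≤ √(‖(1 : Matrix (Fin k) (Fin k) ℝ)‖ ^ 2 + (‖B₁‖ + ‖B₂‖) ^ 2) *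
          √(‖(1 : Matrix (Fin k) (Fin k) ℝ)‖ ^ 2 + (‖-(B₂⁻¹ * B₁)‖ + ‖B₂⁻¹‖) ^ 2) := by
        gcongr <;> exact l2_opNorm_fromBlocks_zero₁₂_le _ _ _
    _ ≤ √(1 + (C₁ + C₂) ^ 2) * √(1 + (C₃ * (1 + C₁)) ^ 2) := by gcongr
    _ = √(1 + (C₁ + C₂) ^ 2) * √(1 + C₃ ^ 2 * (1 + C₁) ^ 2) := by rw [mul_pow]
end
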